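/- Let p be an odd prime and G a finite p-group whose center Z(G) requires exactly d generators (i.e., Z(G)/Z(G)^p has rank d as an F_p-vector space). Then every faithful permutation representation of G of minimal degree has exactly d orbits. In particular, if Z(G) is cyclic then a minimal faithful representation of G is transitive. -/

import Mathlib

/-- The minimal faithful permutation degree of a group: the least `n` such that
the group embeds into `Equiv.Perm (Fin n)`. -/
noncomputable def minFaithfulDegree (G : Type*) [Group G] : ℕ :=
  sInf {n : ℕ | ∃ f : G →* Equiv.Perm (Fin n), Function.Injective f}

/-!
Let `Ω = Ω₁(Z(G))`, an elementary abelian group of order `p ^ d`, and let `H₁, …, H_ℓ` be the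
stabilizers of orbit representatives. Since every nontrivial normal subgroup of a `p`-group meets
`Ω`, a family of subgroups gives a faithful action on `∐ G ⧸ Hᵢ` exactly when `Ω ∩ ⋂ Hᵢ = 1`.
Minimality of the degree then forces two things. No `Hᵢ` can be dropped, so the chain
`Ω ∩ H₁ ∩ ⋯ ∩ H_k` shrinks by a factor at least `p` at each step, whence `ℓ ≤ d`. And
`|Ω : Ω ∩ Hᵢ| ≤ p`: otherwise there are `W₁, W₂` strictly between `Ω ∩ Hᵢ` and `Ω` with
`W₁ ∩ W₂ = Ω ∩ Hᵢ`, and replacing `Hᵢ` by `HᵢW₁` and `HᵢW₂` keeps the action faithful while,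
as `p ≥ 3`, lowering the degree; so `p ^ d = |Ω| ≤ ∏ |Ω : Ω ∩ Hᵢ| ≤ p ^ ℓ`.
The order `|Ω| = p ^ d` comes from `|Ω₁(A)| = |A / A ^ p|` and the Burnside basis theorem for the
abelian group `A = Z(G)`.
-/

open Subgroup

section General

variable {G : Type*} [Group G]

theorem Subgroup.inf_sup_assoc_of_le_of_normal {A C : Subgroup G} (B : Subgroup G) [C.Normal]
    (h : C ≤ A) : A ⊓ B ⊔ C = A ⊓ (B ⊔ C) :=
  SetLike.coe_injective <| by rw [mul_normal, inf_mul_assoc A B C h, coe_inf, mul_normal]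

theorem Subgroup.normal_of_le_center {H : Subgroup G} (h : H ≤ center G) : H.Normal :=
  ⟨fun n hn g => by rwa [mem_center_iff.mp (h hn) g, mul_inv_cancel_right]⟩

variable {p : ℕ} [Fact p.Prime] [Finite G]

theorem IsPGroup.prime_le_relIndex_of_lt (hG : IsPGroup p G) {A B : Subgroup G} (h : A < B) :
    p ≤ A.relIndex B := by
  obtain ⟨k, hk⟩ := (hG.to_subgroup B).index (A.subgroupOf B)
  have hk0 : k ≠ 0 := by
    rintro rfl
    exact h.not_ge (relIndex_eq_one.mp (by rw [relIndex, hk, pow_zero]))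
  calc p = p ^ 1 := (pow_one p).symm
    _ ≤ p ^ k := Nat.pow_le_pow_right (Fact.out : p.Prime).pos (Nat.one_le_iff_ne_zero.mpr hk0)
    _ = A.relIndex B := hk.symm

theorem IsPGroup.card_mul_prime_le_card_of_lt (hG : IsPGroup p G) {A B : Subgroup G} (h : A < B) :
    Nat.card A * p ≤ Nat.card B := by
  calc Nat.card A * p ≤ Nat.card A * A.relIndex B :=
        Nat.mul_le_mul_left _ (hG.prime_le_relIndex_of_lt h)
    _ = Nat.card B := by
      rw [← relIndex_bot_left, ← relIndex_bot_left, relIndex_mul_relIndex _ _ _ bot_le h.le]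

theorem IsPGroup.index_mul_prime_le_index_of_lt (hG : IsPGroup p G) {A B : Subgroup G}
    (h : A < B) : B.index * p ≤ A.index := by
  calc B.index * p ≤ B.index * A.relIndex B :=
        Nat.mul_le_mul_left _ (hG.prime_le_relIndex_of_lt h)
    _ = A.index := by rw [mul_comm, relIndex_mul_index h.le]

theorem IsPGroup.prime_dvd_card_of_ne_bot (hG : IsPGroup p G) {K : Subgroup G} (hK : K ≠ ⊥) :
    p ∣ Nat.card K := by
  obtain ⟨k, hk0, hk⟩ :=
    (hG.to_subgroup K).nontrivial_iff_card.mp ((nontrivial_iff_ne_bot K).mpr hK)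
  exact hk ▸ dvd_pow_self p hk0.ne'

theorem IsPGroup.inf_center_ne_bot_of_normal (hG : IsPGroup p G) {N : Subgroup G} [N.Normal]
    (hN : N ≠ ⊥) : N ⊓ center G ≠ ⊥ := by
  have h1 : (1 : N) ∈ MulAction.fixedPoints (ConjAct G) N := fun g => smul_one g
  obtain ⟨b, hb, hb1⟩ :=
    (hG.of_equiv ConjAct.toConjAct).exists_fixed_point_of_prime_dvd_card_of_fixed_point N
      (hG.prime_dvd_card_of_ne_bot hN) h1
  have hbZ : (b : G) ∈ center G := mem_center_iff.mpr fun g => by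
    have := congrArg Subtype.val (hb (ConjAct.toConjAct g))
    rw [ConjAct.Subgroup.val_conj_smul, ConjAct.toConjAct_smul] at this
    exact (eq_mul_inv_iff_mul_eq.mp this.symm).symm
  intro h
  exact hb1 (Subtype.ext ((eq_bot_iff_forall _).mp h b ⟨b.2, hbZ⟩).symm)

end General

section OmegaOneCenter

variable (p : ℕ) (G : Type*) [Group G]

def omegaOneCenter : Subgroup G where
  carrier := {x | x ∈ center G ∧ x ^ p = 1}
  one_mem' := ⟨one_mem _, one_pow p⟩
  mul_mem' := fun {a b} ⟨ha, hap⟩ ⟨hb, hbp⟩ =>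
    ⟨mul_mem ha hb, by rw [Commute.mul_pow (mem_center_iff.mp hb a), hap, hbp, one_mul]⟩
  inv_mem' := fun {a} ⟨ha, hap⟩ => ⟨inv_mem ha, by rw [inv_pow, hap, inv_one]⟩

variable {p G}

theorem mem_omegaOneCenter {x : G} : x ∈ omegaOneCenter p G ↔ x ∈ center G ∧ x ^ p = 1 :=
  Iff.rfl

theorem omegaOneCenter_le_center : omegaOneCenter p G ≤ center G := fun _ hx => hx.1

theorem omegaOneCenter_inf_sup_eq_of_le {H W : Subgroup G} (hHW : H ⊓ omegaOneCenter p G ≤ W)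
    (hW : W ≤ omegaOneCenter p G) : omegaOneCenter p G ⊓ (H ⊔ W) = W := by
  have : W.Normal := normal_of_le_center (hW.trans omegaOneCenter_le_center)
  rw [← inf_sup_assoc_of_le_of_normal _ hW, inf_comm, sup_eq_right.mpr hHW]

variable [Fact p.Prime]

theorem exists_lt_inf_eq_of_prime_lt_relIndex {M : Subgroup G} (hM : M ≤ omegaOneCenter p G)
    (hMp : p < M.relIndex (omegaOneCenter p G)) :
    ∃ W₁ W₂ : Subgroup G, M < W₁ ∧ M < W₂ ∧ W₁ ≤ omegaOneCenter p G ∧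
      W₂ ≤ omegaOneCenter p G ∧ W₁ ⊓ W₂ = M := by
  set Ω := omegaOneCenter p G
  have hp : p.Prime := Fact.out
  have : M.Normal := normal_of_le_center (hM.trans omegaOneCenter_le_center)
  have relIndex_sup_zpowers_le : ∀ u ∈ Ω, M.relIndex (M ⊔ zpowers u) ≤ p := fun u hu => by
    rw [relIndex_sup_left]
    exact Nat.le_of_dvd hp.pos ((index_dvd_card _).trans
      ((Nat.card_zpowers u).symm ▸ orderOf_dvd_of_pow_eq_one hu.2))
  obtain ⟨u, huΩ, huM⟩ := SetLike.not_le_iff_exists.mp fun h : Ω ≤ M => by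
    rw [relIndex_eq_one.mpr h] at hMp
    exact hp.one_lt.not_gt hMp
  set W₁ := M ⊔ zpowers u
  have hW₁ : W₁ ≤ Ω := sup_le hM (zpowers_le.mpr huΩ)
  obtain ⟨v, hvΩ, hvW₁⟩ := SetLike.not_le_iff_exists.mp fun h : Ω ≤ W₁ => by
    rw [← relIndex_mul_relIndex _ _ _ le_sup_left hW₁, relIndex_eq_one.mpr h, mul_one] at hMp
    exact (relIndex_sup_zpowers_le u huΩ).not_gt hMp
  have : Fact (Nat.card (zpowers v)).Prime := ⟨by
    rw [Nat.card_zpowers, orderOf_eq_prime hvΩ.2 fun h => hvW₁ (h ▸ one_mem _)]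
    exact hp⟩
  have hW₁v : W₁ ⊓ zpowers v = ⊥ := by
    rcases (W₁.subgroupOf (zpowers v)).eq_bot_or_eq_top_of_prime_card with h | h
    · exact disjoint_iff.mp (subgroupOf_eq_bot.mp h)
    · exact absurd (subgroupOf_eq_top.mp h (mem_zpowers v)) hvW₁
  refine ⟨W₁, M ⊔ zpowers v, lt_of_le_of_ne le_sup_left fun h => huM ?_,
    lt_of_le_of_ne le_sup_left fun h => hvW₁ ?_, hW₁, sup_le hM (zpowers_le.mpr hvΩ), ?_⟩
  · exact h ▸ mem_sup_right (mem_zpowers u)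
  · exact mem_sup_left (h ▸ mem_sup_right (mem_zpowers v))
  · rw [sup_comm, ← inf_sup_assoc_of_le_of_normal _ le_sup_left, hW₁v, bot_sup_eq]

variable [Finite G]

theorem IsPGroup.eq_bot_of_omegaOneCenter_inf_eq_bot (hG : IsPGroup p G) {N : Subgroup G}
    [N.Normal] (h : omegaOneCenter p G ⊓ N = ⊥) : N = ⊥ := by
  by_contra hN
  obtain ⟨x, hx⟩ := exists_prime_orderOf_dvd_card' p
    (hG.prime_dvd_card_of_ne_bot (hG.inf_center_ne_bot_of_normal hN))
  have hx1 : (x : G) ∈ omegaOneCenter p G ⊓ N :=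
    ⟨⟨x.2.2, by rw [← hx, ← orderOf_coe, pow_orderOf_eq_one]⟩, x.2.1⟩
  rw [h, mem_bot, ← orderOf_eq_one_iff, orderOf_coe, hx] at hx1
  exact (Fact.out : p.Prime).one_lt.ne' hx1

end OmegaOneCenter

section ElementaryAbelian

variable {A : Type*} [CommGroup A] [Finite A] {p : ℕ} [Fact p.Prime]

theorem card_eq_pow_rank_of_forall_pow_eq_one (h : ∀ a : A, a ^ p = 1) :
    Nat.card A = p ^ Group.rank A := by
  let : Module (ZMod p) (Additive A) := AddCommGroup.zmodModule (n := p) fun x => h x.toMul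
  have : Module.Finite (ZMod p) (Additive A) := Module.Finite.of_finite
  let b := Module.finBasis (ZMod p) (Additive A)
  have hb : closure (Set.range fun i => (b i).toMul) = ⊤ := by
    have hspan : Submodule.span (ZMod p) (Set.range b) ≤ AddSubgroup.toZModSubmodule p
        (closure (Set.range fun i => (b i).toMul)).toAddSubgroup :=
      Submodule.span_le.mpr (Set.range_subset_iff.mpr fun i =>
        (subset_closure ⟨i, rfl⟩ : (b i).toMul ∈ closure (Set.range fun i => (b i).toMul)))
    rw [b.span_eq] at hspan
    exact eq_top_iff.mpr fun x _ => hspan (Submodule.mem_top (x := Additive.ofMul x))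
  refine le_antisymm (Nat.le_of_dvd (pow_pos (Fact.out : p.Prime).pos _)
    (card_dvd_exponent_pow_rank' (G := A) h)) ?_
  calc p ^ Group.rank A ≤ p ^ Module.finrank (ZMod p) (Additive A) := by
        refine Nat.pow_le_pow_right (Fact.out : p.Prime).pos ?_
        classical
        refine (Group.rank_le (S := Finset.univ.image fun i => (b i).toMul) ?_).trans ?_
        · simpa using hb
        · exact Finset.card_image_le.trans (by simp)
    _ = Nat.card A := by
      have := Module.natCard_eq_pow_finrank (K := ZMod p) (V := Additive A)
      rw [Nat.card_zmod] at this
      exact this.symm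

theorem IsPGroup.eq_top_of_sup_range_powMonoidHom_eq_top (hA : IsPGroup p A) {H : Subgroup A}
    (hH : H ⊔ (powMonoidHom p).range = ⊤) : H = ⊤ := by
  have hsurj : Function.Surjective fun q : A ⧸ H => q ^ p := by
    intro q
    obtain ⟨a, rfl⟩ := QuotientGroup.mk_surjective q
    obtain ⟨h, hh, _, ⟨b, rfl⟩, rfl⟩ := mem_sup.mp (hH ▸ mem_top a : a ∈ H ⊔ _)
    refine ⟨b, ?_⟩
    simp [(QuotientGroup.eq_one_iff h).mpr hh]
  obtain ⟨k, hk⟩ := IsPGroup.iff_card.mp (hA.to_quotient H)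
  refine eq_top_iff.mpr fun a _ => (QuotientGroup.eq_one_iff a).mp ?_
  obtain ⟨r, hr⟩ := hsurj.iterate k (a : A ⧸ H)
  rw [← hr, pow_iterate, ← hk]
  exact pow_card_eq_one'

theorem IsPGroup.rank_quotient_range_powMonoidHom (hA : IsPGroup p A) :
    Group.rank (A ⧸ (powMonoidHom p : A →* A).range) = Group.rank A := by
  classical
  set R := (powMonoidHom p : A →* A).range
  refine le_antisymm (Group.rank_le_of_surjective _ (QuotientGroup.mk'_surjective R)) ?_
  obtain ⟨S, hScard, hS⟩ := Group.rank_spec (A ⧸ R)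
  have hT : closure ((S.image Quotient.out : Finset A) : Set A) ⊔ R = ⊤ := by
    have := comap_map_eq (QuotientGroup.mk' R)
      (closure ((S.image Quotient.out : Finset A) : Set A))
    rw [QuotientGroup.ker_mk'] at this
    rw [← this, MonoidHom.map_closure, Finset.coe_image, Set.image_image]
    simp [hS]
  calc Group.rank A ≤ (S.image Quotient.out).card :=
        Group.rank_le (hA.eq_top_of_sup_range_powMonoidHom_eq_top hT)
    _ ≤ S.card := Finset.card_image_le
    _ = Group.rank (A ⧸ R) := hScard

theorem IsPGroup.card_ker_powMonoidHom (hA : IsPGroup p A) :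
    Nat.card (powMonoidHom p : A →* A).ker = p ^ Group.rank A := by
  rw [← index_range, Subgroup.index, ← hA.rank_quotient_range_powMonoidHom]
  refine card_eq_pow_rank_of_forall_pow_eq_one fun q => ?_
  obtain ⟨a, rfl⟩ := QuotientGroup.mk_surjective q
  rw [← QuotientGroup.mk_pow, QuotientGroup.eq_one_iff]
  exact ⟨a, rfl⟩

open scoped IsMulCommutative in
theorem IsPGroup.card_omegaOneCenter {p : ℕ} [Fact p.Prime] {G : Type*} [Group G] [Finite G]
    (hG : IsPGroup p G) : Nat.card (omegaOneCenter p G) = p ^ Group.rank (center G) := by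
  have : omegaOneCenter p G =
      (powMonoidHom p : center G →* center G).ker.map (center G).subtype := by
    ext x
    simp [mem_omegaOneCenter, and_comm]
  rw [this, card_map_of_injective (center G).subtype_injective,
    (hG.to_subgroup _).card_ker_powMonoidHom]

theorem IsCyclic.rank_le_one {A : Type*} [Group A] [IsCyclic A] [Group.FG A] :
    Group.rank A ≤ 1 := by
  obtain ⟨g, hg⟩ := isCyclic_iff_exists_zpowers_eq_top.mp ‹_›
  calc Group.rank A ≤ ({g} : Finset A).card :=
        Group.rank_le (by rw [Finset.coe_singleton, ← zpowers_eq_closure, hg])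
    _ = 1 := Finset.card_singleton g

end ElementaryAbelian

section MinFaithfulDegree

variable {G : Type*} [Group G]

theorem minFaithfulDegree_le_card (α : Type*) [Finite α] [MulAction G α] [FaithfulSMul G α] :
    minFaithfulDegree G ≤ Nat.card α :=
  Nat.sInf_le ⟨(Finite.equivFin α).permCongrHom.toMonoidHom.comp (MulAction.toPermHom G α),
    (Finite.equivFin α).permCongrHom.injective.comp MulAction.toPerm_injective⟩

theorem minFaithfulDegree_le_sum_index [Finite G] {ι : Type*} [Fintype ι] (K : ι → Subgroup G)
    (hK : ⨅ i, (K i).normalCore = ⊥) : minFaithfulDegree G ≤ ∑ i, (K i).index := by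
  have : FaithfulSMul G (Σ i, G ⧸ K i) := ⟨fun {g₁ g₂} h => by
    suffices g₁⁻¹ * g₂ ∈ ⨅ i, (K i).normalCore by
      rwa [hK, mem_bot, inv_mul_eq_one] at this
    refine mem_iInf.mpr fun i => ?_
    rw [normalCore_eq_ker, MonoidHom.mem_ker]
    ext x
    have hx : g₁ • x = g₂ • x := eq_of_heq (Sigma.mk.inj_iff.mp (h ⟨i, x⟩)).2
    simp [mul_smul, inv_smul_eq_iff, hx]⟩
  calc minFaithfulDegree G ≤ Nat.card (Σ i, G ⧸ K i) := minFaithfulDegree_le_card _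
    _ = ∑ i, (K i).index := by simp [Nat.card_sigma, index]

end MinFaithfulDegree

section MinimalFaithfulFamily

variable {G : Type*} [Group G] {ι : Type*} [Fintype ι]

/-- The action of `G` on `Σ i, G ⧸ H i`, whose kernel is `⨅ i, (H i).normalCore`, is faithful
and of minimal degree. -/
structure IsMinimalFaithfulFamily (H : ι → Subgroup G) : Prop where
  iInf_normalCore_eq_bot : ⨅ i, (H i).normalCore = ⊥
  sum_index_le : ∑ i, (H i).index ≤ minFaithfulDegree G

theorem MulAction.isMinimalFaithfulFamily_stabilizer_out {α : Type*} [Finite α] [MulAction G α]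
    [FaithfulSMul G α] [Fintype (orbitRel.Quotient G α)] (h : Nat.card α ≤ minFaithfulDegree G) :
    IsMinimalFaithfulFamily fun o : orbitRel.Quotient G α => stabilizer G o.out where
  iInf_normalCore_eq_bot := by
    refine eq_bot_iff.mpr fun g hg => mem_bot.mpr (eq_of_smul_eq_smul (α := α) fun x => ?_)
    obtain ⟨a, ha⟩ := mem_orbit_iff.mp (Quotient.mk_out (s := orbitRel G α) x)
    have : a * g * a⁻¹ ∈ stabilizer G (Quotient.mk _ x : orbitRel.Quotient G α).out :=
      mem_iInf.mp hg _ a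
    rwa [mem_stabilizer_iff, ← ha, mul_smul, mul_smul, inv_smul_smul, smul_left_cancel_iff,
      ← one_smul G x, smul_smul, mul_one] at this
  sum_index_le := by
    have (o : orbitRel.Quotient G α) : Finite (G ⧸ stabilizer G o.out) :=
      .of_equiv _ (orbitEquivQuotientStabilizer G o.out)
    rwa [Nat.card_congr (selfEquivSigmaOrbitsQuotientStabilizer G α), Nat.card_sigma] at h

variable {p : ℕ} {H : ι → Subgroup G}

theorem IsMinimalFaithfulFamily.omegaOneCenter_inf_iInf_eq_bot
    (hH : IsMinimalFaithfulFamily H) : omegaOneCenter p G ⊓ ⨅ i, H i = ⊥ := by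
  have : (omegaOneCenter p G ⊓ ⨅ i, H i).Normal :=
    normal_of_le_center (inf_le_left.trans omegaOneCenter_le_center)
  refine eq_bot_iff.mpr (le_of_le_of_eq (le_iInf fun i => ?_) hH.iInf_normalCore_eq_bot)
  exact normal_le_normalCore.mpr (inf_le_right.trans (iInf_le _ i))

variable [Fact p.Prime] [Finite G]

theorem IsPGroup.minFaithfulDegree_le_sum_index (hG : IsPGroup p G) {κ : Type*} [Fintype κ]
    (K : κ → Subgroup G) (hK : omegaOneCenter p G ⊓ ⨅ i, K i = ⊥) :
    minFaithfulDegree G ≤ ∑ i, (K i).index := by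
  have : (⨅ i, (K i).normalCore).Normal := normal_iInf_normal fun i => normalCore_normal _
  refine _root_.minFaithfulDegree_le_sum_index K (hG.eq_bot_of_omegaOneCenter_inf_eq_bot ?_)
  exact eq_bot_iff.mpr (hK ▸ inf_le_inf_left _ (iInf_mono fun i => normalCore_le _))

theorem IsMinimalFaithfulFamily.not_omegaOneCenter_inf_iInf_ne_le (hG : IsPGroup p G)
    (hH : IsMinimalFaithfulFamily H) (i : ι) :
    ¬ omegaOneCenter p G ⊓ ⨅ j : {j // j ≠ i}, H j ≤ H i := by
  classical
  intro hle
  have hK : omegaOneCenter p G ⊓ ⨅ j : {j // j ≠ i}, H j = ⊥ := by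
    refine eq_bot_iff.mpr (le_of_le_of_eq ?_ (hH.omegaOneCenter_inf_iInf_eq_bot (p := p)))
    refine le_inf inf_le_left (le_iInf fun j => ?_)
    by_cases hj : j = i
    · exact hj ▸ hle
    · exact inf_le_right.trans (iInf_le (fun j : {j // j ≠ i} => H j) ⟨j, hj⟩)
  have h₁ := hG.minFaithfulDegree_le_sum_index _ hK
  have h₂ := hH.sum_index_le
  have h₃ : (H i).index ≠ 0 := index_ne_zero_of_finite
  rw [Fintype.sum_eq_add_sum_subtype_ne _ i] at h₂
  omega

theorem IsMinimalFaithfulFamily.relIndex_omegaOneCenter_le (hG : IsPGroup p G) (hp : Odd p)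
    (hH : IsMinimalFaithfulFamily H) (i : ι) : (H i).relIndex (omegaOneCenter p G) ≤ p := by
  classical
  set Ω := omegaOneCenter p G
  by_contra! hlt
  obtain ⟨W₁, W₂, hW₁, hW₂, hW₁Ω, hW₂Ω, hW⟩ :=
    exists_lt_inf_eq_of_prime_lt_relIndex (inf_le_right : H i ⊓ Ω ≤ Ω)
      (by rwa [inf_relIndex_right])
  have hidx {W : Subgroup G} (hW : H i ⊓ Ω < W) (hWΩ : W ≤ Ω) :
      (H i ⊔ W).index * p ≤ (H i).index :=
    hG.index_mul_prime_le_index_of_lt (left_lt_sup.mpr fun h => hW.not_ge (le_inf h hWΩ))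
  let K : {j // j ≠ i} ⊕ Fin 2 → Subgroup G := Sum.elim (fun j => H j) ![H i ⊔ W₁, H i ⊔ W₂]
  have hK : Ω ⊓ ⨅ k, K k = ⊥ := by
    refine eq_bot_iff.mpr fun z ⟨hzΩ, hzK⟩ => hH.omegaOneCenter_inf_iInf_eq_bot.le
      ⟨hzΩ, mem_iInf.mpr fun j => ?_⟩
    by_cases hj : j = i
    · have h₁ : z ∈ W₁ :=
        (omegaOneCenter_inf_sup_eq_of_le hW₁.le hW₁Ω).le ⟨hzΩ, mem_iInf.mp hzK (.inr 0)⟩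
      have h₂ : z ∈ W₂ :=
        (omegaOneCenter_inf_sup_eq_of_le hW₂.le hW₂Ω).le ⟨hzΩ, mem_iInf.mp hzK (.inr 1)⟩
      exact hj ▸ (hW.le ⟨h₁, h₂⟩ : z ∈ H i ⊓ Ω).1
    · exact mem_iInf.mp hzK (.inl ⟨j, hj⟩)
  have h₁ := hG.minFaithfulDegree_le_sum_index K hK
  have h₂ := hH.sum_index_le
  have h₃ : (H i).index ≠ 0 := index_ne_zero_of_finite
  have h₄ : 3 ≤ p := by
    obtain ⟨k, rfl⟩ := hp
    have := (Fact.out : (2 * k + 1).Prime).two_le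
    omega
  simp only [K, Fintype.sum_sum_type, Fin.sum_univ_two, Sum.elim_inl, Sum.elim_inr,
    Matrix.cons_val_zero, Matrix.cons_val_one] at h₁
  rw [Fintype.sum_eq_add_sum_subtype_ne _ i] at h₂
  linarith [hidx hW₁ hW₁Ω, hidx hW₂ hW₂Ω, Nat.pos_of_ne_zero h₃,
    Nat.mul_le_mul_left ((H i ⊔ W₁).index + (H i ⊔ W₂).index) h₄]

theorem IsMinimalFaithfulFamily.rank_center_le_card (hG : IsPGroup p G) (hp : Odd p)
    (hH : IsMinimalFaithfulFamily H) : Group.rank (center G) ≤ Fintype.card ι := by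
  refine (Nat.pow_le_pow_iff_right (Fact.out : p.Prime).one_lt).mp ?_
  calc p ^ Group.rank (center G)
    _ = Nat.card (omegaOneCenter p G) := hG.card_omegaOneCenter.symm
    _ = (⨅ i, H i).relIndex (omegaOneCenter p G) := by
      rw [← inf_relIndex_right, inf_comm, hH.omegaOneCenter_inf_iInf_eq_bot, relIndex_bot_left]
    _ ≤ ∏ i, (H i).relIndex (omegaOneCenter p G) := relIndex_iInf_le _
    _ ≤ ∏ _i : ι, p := Finset.prod_le_prod' fun i _ => hH.relIndex_omegaOneCenter_le hG hp i
    _ = p ^ Fintype.card ι := by rw [Finset.prod_const, Finset.card_univ]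

theorem IsMinimalFaithfulFamily.card_le_rank_center (hG : IsPGroup p G)
    (hH : IsMinimalFaithfulFamily H) : Fintype.card ι ≤ Group.rank (center G) := by
  classical
  set Ω := omegaOneCenter p G
  have chain (s : Finset ι) : Nat.card ↥(Ω ⊓ ⨅ j ∈ s, H j) * p ^ s.card ≤ Nat.card Ω := by
    induction s using Finset.induction_on with
    | empty => simp
    | insert i s hi ih =>
      have hlt : Ω ⊓ ⨅ j ∈ insert i s, H j < Ω ⊓ ⨅ j ∈ s, H j := by
        rw [Finset.iInf_insert, inf_left_comm]
        refine inf_lt_right.mpr fun hle => hH.not_omegaOneCenter_inf_iInf_ne_le hG i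
          (le_trans (inf_le_inf_left _ (le_iInf₂ fun j hj => ?_)) hle)
        exact iInf_le (fun j : {j // j ≠ i} => H j) ⟨j, ne_of_mem_of_not_mem hj hi⟩
      calc _ = Nat.card ↥(Ω ⊓ ⨅ j ∈ insert i s, H j) * p * p ^ s.card := by
            rw [Finset.card_insert_of_notMem hi, pow_succ', mul_assoc]
        _ ≤ Nat.card ↥(Ω ⊓ ⨅ j ∈ s, H j) * p ^ s.card :=
            Nat.mul_le_mul_right _ (hG.card_mul_prime_le_card_of_lt hlt)
        _ ≤ Nat.card Ω := ih
  have := chain Finset.univ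
  simp only [Finset.mem_univ, iInf_true, Finset.card_univ] at this
  rw [show Ω ⊓ ⨅ j, H j = ⊥ from hH.omegaOneCenter_inf_iInf_eq_bot, card_bot, one_mul,
    show Nat.card Ω = _ from hG.card_omegaOneCenter] at this
  exact (Nat.pow_le_pow_iff_right (Fact.out : p.Prime).one_lt).mp this

theorem IsMinimalFaithfulFamily.card_eq_rank_center (hG : IsPGroup p G) (hp : Odd p)
    (hH : IsMinimalFaithfulFamily H) : Fintype.card ι = Group.rank (center G) :=
  (hH.card_le_rank_center hG).antisymm (hH.rank_center_le_card hG hp)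

end MinimalFaithfulFamily

open MulAction in
theorem johnson_orbit_count (p : ℕ) (hp : p.Prime) (hodd : Odd p)
    (G : Type*) [Group G] [Finite G] (hpG : IsPGroup p G)
    (d : ℕ) (hd : Group.rank (Subgroup.center G) = d)
    (n : ℕ) (hn : n = minFaithfulDegree G)
    [MulAction G (Fin n)] [FaithfulSMul G (Fin n)] :
    Nat.card (Quotient (MulAction.orbitRel G (Fin n))) = d ∧
    (IsCyclic (Subgroup.center G) → MulAction.IsPretransitive G (Fin n)) := by
  have : Fact p.Prime := ⟨hp⟩
  have := Fintype.ofFinite (orbitRel.Quotient G (Fin n))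
  have hH := isMinimalFaithfulFamily_stabilizer_out (G := G) (α := Fin n)
    (by rw [Nat.card_fin, hn])
  have horbits : Nat.card (orbitRel.Quotient G (Fin n)) = d := by
    rw [Nat.card_eq_fintype_card, hH.card_eq_rank_center hpG hodd, hd]
  refine ⟨horbits, fun _ => (pretransitive_iff_subsingleton_quotient G (Fin n)).mpr ?_⟩
  exact Finite.card_le_one_iff_subsingleton.mp (horbits ▸ hd ▸ IsCyclic.rank_le_one)
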